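/- arXiv:1701.08316 — 6 statements merged into one kernel-verified Lean document; each statement's English description precedes it below -/
import Mathlib

section
/- Let M_n(F) carry the elementary G-grading induced by pairwise distinct g_1,...,g_n, and suppose g ≠ e. Then for all a, c ∈ R_g and b ∈ R_{g^{-1}} one has abc = cba; i.e., x_{1,g} x_{2,g^{-1}} x_{3,g} − x_{3,g} x_{2,g^{-1}} x_{1,g} is a graded identity of M_n(F). -/
open Matrix

/-
With respect to the elementary grading, the entry (i, j) of a homogeneous matrix of
degree c can be nonzero only if g_j = g_i c. For a, d of degree c and b of degree c⁻¹, a nonzero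
term a_ij b_jk d_kl of (a b d)_il therefore forces g_j = g_i c, g_k = g_j c⁻¹ = g_i and
g_l = g_k c = g_j, so k = i and j = l by injectivity of g. Hence (a b d)_il = a_il b_li d_il,
an expression symmetric in a and d.
-/

section ElementaryGrading

variable {F G ι : Type*} [Semiring F] [Group G]

def homogeneousComponent (g : ι → G) (c : G) : Submodule F (Matrix ι ι F) where
  carrier := {M | ∀ i j, (g i)⁻¹ * g j ≠ c → M i j = 0}
  zero_mem' _ _ _ := rfl
  add_mem' hM hN i j h := by simp [hM i j h, hN i j h]
  smul_mem' r M hM i j h := by simp [hM i j h]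

theorem span_single_le_homogeneousComponent [DecidableEq ι] (g : ι → G) (c : G) :
    Submodule.span F {M : Matrix ι ι F | ∃ i j, (g i)⁻¹ * g j = c ∧ M = single i j 1} ≤
      homogeneousComponent g c := by
  refine Submodule.span_le.mpr ?_
  rintro _ ⟨i, j, hij, rfl⟩ k l hkl
  rw [single_apply_of_ne]
  rintro ⟨rfl, rfl⟩
  exact hkl hij

theorem eq_of_apply_mul_apply_mul_apply_ne_zero {g : ι → G} (hg : Function.Injective g) {c : G}
    {a b d : Matrix ι ι F} (ha : a ∈ homogeneousComponent g c)
    (hb : b ∈ homogeneousComponent g c⁻¹) (hd : d ∈ homogeneousComponent g c) {i j k l : ι}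
    (h : a i j * b j k * d k l ≠ 0) : k = i ∧ j = l := by
  have hij : g j = g i * c := inv_mul_eq_iff_eq_mul.mp <|
    not_imp_comm.mp (ha i j) (left_ne_zero_of_mul (left_ne_zero_of_mul h))
  have hjk : g k = g j * c⁻¹ := inv_mul_eq_iff_eq_mul.mp <|
    not_imp_comm.mp (hb j k) (right_ne_zero_of_mul (left_ne_zero_of_mul h))
  have hkl : g l = g k * c := inv_mul_eq_iff_eq_mul.mp <|
    not_imp_comm.mp (hd k l) (right_ne_zero_of_mul h)
  have hki : k = i := hg (by rw [hjk, hij, mul_inv_cancel_right])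
  exact ⟨hki, hg (by rw [hkl, hki, hij])⟩

theorem mul_mul_apply_of_mem_homogeneousComponent [Fintype ι] {g : ι → G}
    (hg : Function.Injective g) {c : G} {a b d : Matrix ι ι F}
    (ha : a ∈ homogeneousComponent g c)
    (hb : b ∈ homogeneousComponent g c⁻¹) (hd : d ∈ homogeneousComponent g c) (i l : ι) :
    (a * b * d) i l = a i l * b l i * d i l := by
  simp only [mul_apply, Finset.sum_mul]
  rw [← Fintype.sum_prod_type', Fintype.sum_eq_single (i, l)]
  rintro ⟨k, j⟩ hkj
  by_contra h
  obtain ⟨rfl, rfl⟩ := eq_of_apply_mul_apply_mul_apply_ne_zero hg ha hb hd h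
  exact hkj rfl

end ElementaryGrading

theorem stmt_5_general (F : Type*) [Field F] (G : Type*) [Group G] (n : ℕ)
    (g : Fin n → G) (hinj : Function.Injective g)
    (R : G → Submodule F (Matrix (Fin n) (Fin n) F))
    (hR : ∀ c : G, R c = Submodule.span F
      {M : Matrix (Fin n) (Fin n) F | ∃ i j : Fin n,
        (g i)⁻¹ * g j = c ∧ M = Matrix.single i j 1})
    (c : G) :
    ∀ a ∈ R c, ∀ b ∈ R c⁻¹, ∀ d ∈ R c, a * b * d = d * b * a := by
  have hR_le (c : G) : R c ≤ homogeneousComponent g c :=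
    hR c ▸ span_single_le_homogeneousComponent g c
  intro a ha b hb d hd
  ext i l
  rw [mul_mul_apply_of_mem_homogeneousComponent hinj (hR_le c ha) (hR_le c⁻¹ hb) (hR_le c hd),
    mul_mul_apply_of_mem_homogeneousComponent hinj (hR_le c hd) (hR_le c⁻¹ hb) (hR_le c ha)]
  ring

/-- With the elementary grading on M_n(F) induced by pairwise distinct
g_1,...,g_n and g ≠ e, for all a, c ∈ R_g and b ∈ R_{g⁻¹} one has abc = cba;
i.e. x_{1,g} x_{2,g⁻¹} x_{3,g} − x_{3,g} x_{2,g⁻¹} x_{1,g} is a graded identity. -/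
theorem stmt_5 (F : Type*) [Field F] (G : Type*) [Group G] (n : ℕ)
    (g : Fin n → G) (hinj : Function.Injective g)
    (R : G → Submodule F (Matrix (Fin n) (Fin n) F))
    (hR : ∀ c : G, R c = Submodule.span F
      {M : Matrix (Fin n) (Fin n) F | ∃ i j : Fin n,
        (g i)⁻¹ * g j = c ∧ M = Matrix.single i j 1})
    (c : G) (hc : c ≠ 1) :
    ∀ a ∈ R c, ∀ b ∈ R c⁻¹, ∀ d ∈ R c, a * b * d = d * b * a :=
  stmt_5_general F G n g hinj R hR c
end

section
/- With notation as before: if the domain D_ν of ν = ĥ_r ∘ ⋯ ∘ ĥ_1 is nonempty, then the i-th row of the product A_{1,h_1}⋯A_{r,h_r} of generic matrices is nonzero if and only if i ∈ D_ν, and in that case the unique nonzero entry of row i lies in column ν(i) and equals the monomial y^1_{i, ĥ_1(i)} y^2_{ĥ_1(i), ĥ_2 ĥ_1(i)} ⋯ (a single monomial in the commuting variables). -/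
/-!
Expanding the product entry as a sum over paths `i = s₀, s₁, …, s_r = j`, the path term is
`∏ A_{k,h_k}(s_k, s_{k+1})`, which vanishes unless `g_{s_k} h_k = g_{s_{k+1}}` for every `k`, in
which case it is the monomial `∏ y^k_{s_k, s_{k+1}}`. Since `g` is injective, such a walk is
determined by its starting point, so row `i` has at most one nonzero term, located at the end of
the walk from `i`.
-/

open scoped Classical

theorem Matrix.list_ofFn_prod_apply {ι R : Type*} [Fintype ι] [DecidableEq ι] [CommSemiring R]
    {r : ℕ} (M : Fin r → Matrix ι ι R) (i j : ι) :
    (List.ofFn M).prod i j = ∑ s : Fin (r + 1) → ι,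
      if s 0 = i ∧ s (Fin.last r) = j then ∏ k, M k (s k.castSucc) (s k.succ) else 0 := by
  induction r generalizing i with
  | zero =>
    rw [← (Equiv.funUnique (Fin 1) ι).symm.sum_comp]
    simp only [List.ofFn_zero, List.prod_nil, Finset.univ_eq_empty, Finset.prod_empty]
    rw [Finset.sum_eq_single i (fun b _ hb => by simp [hb]) (by simp)]
    simp [Matrix.one_apply, Fin.last]
  | succ r ih =>
    rw [← (Fin.consEquiv fun _ => ι).sum_comp, Fintype.sum_prod_type, Finset.sum_comm,
      List.ofFn_succ, List.prod_cons, Matrix.mul_apply]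
    simp only [ih, Finset.mul_sum, mul_ite, mul_zero]
    rw [Finset.sum_comm]
    refine Finset.sum_congr rfl fun t _ => ?_
    simp [Fin.consEquiv, Fin.prod_univ_succ, ← Fin.succ_last, ite_and]

namespace GenericMatrix

variable {G ι : Type*} [Group G] {r : ℕ}

/-- `s` is the orbit of `s 0` under the partial maps `ĥ_1, …, ĥ_r`. -/
def IsWalk (g : ι → G) (h : Fin r → G) (s : Fin (r + 1) → ι) : Prop :=
  ∀ k : Fin r, g (s k.castSucc) * h k = g (s k.succ)

theorem IsWalk.eq_of_head_eq {g : ι → G} (hinj : Function.Injective g) {h : Fin r → G}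
    {s t : Fin (r + 1) → ι} (hs : IsWalk g h s) (ht : IsWalk g h t) (h0 : s 0 = t 0) :
    s = t := by
  funext k
  induction k using Fin.induction with
  | zero => exact h0
  | succ k ih => exact hinj (by rw [← hs k, ← ht k, ih])

variable {R : Type*} [CommSemiring R] [Fintype ι] [DecidableEq ι]
  {g : ι → G} {h : Fin r → G} {A : ℕ → G → Matrix ι ι (MvPolynomial (ℕ × ι × ι) R)}

theorem prod_apply_eq_sum_walks
    (hA : ∀ (m : ℕ) (c : G) (p q : ι),
      A m c p q = if g p * c = g q then MvPolynomial.X (m, p, q) else 0) (i j : ι) :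
    (List.ofFn fun k : Fin r => A k (h k)).prod i j =
      ∑ s with s 0 = i ∧ s (Fin.last r) = j ∧ IsWalk g h s,
        ∏ k : Fin r, MvPolynomial.X ((k : ℕ), s k.castSucc, s k.succ) := by
  rw [Matrix.list_ofFn_prod_apply, Finset.sum_filter]
  refine Finset.sum_congr rfl fun s _ => ?_
  simp only [hA, Finset.prod_ite_zero, Finset.mem_univ, true_implies, IsWalk, ← and_assoc,
    ite_and]

theorem prod_apply_of_isWalk (hinj : Function.Injective g)
    (hA : ∀ (m : ℕ) (c : G) (p q : ι),
      A m c p q = if g p * c = g q then MvPolynomial.X (m, p, q) else 0)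
    {s : Fin (r + 1) → ι} (hs : IsWalk g h s) (j : ι) :
    (List.ofFn fun k : Fin r => A k (h k)).prod (s 0) j =
      if j = s (Fin.last r) then ∏ k : Fin r, MvPolynomial.X ((k : ℕ), s k.castSucc, s k.succ)
      else 0 := by
  have walk_eq : ∀ t ∈ ({t | t 0 = s 0 ∧ t (Fin.last r) = j ∧ IsWalk g h t} :
      Finset (Fin (r + 1) → ι)), t = s := fun t ht => by
    simp only [Finset.mem_filter, Finset.mem_univ, true_and] at ht
    exact ht.2.2.eq_of_head_eq hinj hs ht.1
  rw [prod_apply_eq_sum_walks hA]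
  split_ifs with hj
  · subst hj
    exact Finset.sum_eq_single_of_mem s (by simp [hs])
      fun t ht hts => absurd (walk_eq t ht) hts
  · refine Finset.sum_eq_zero fun t ht => absurd ?_ hj
    obtain rfl := walk_eq t ht
    simp only [Finset.mem_filter] at ht
    exact ht.2.2.1.symm

end GenericMatrix

open GenericMatrix in
theorem stmt_13_general (F : Type*) [Field F] (G : Type*) [Group G] (n : ℕ)
    (g : Fin n → G) (hinj : Function.Injective g)
    (r : ℕ) (h : Fin r → G)
    (A : ℕ → G → Matrix (Fin n) (Fin n) (MvPolynomial (ℕ × Fin n × Fin n) F))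
    (hA : ∀ (m : ℕ) (c : G) (p q : Fin n),
      A m c p q = if g p * c = g q then MvPolynomial.X (m, p, q) else 0) :
    ∀ i : Fin n,
      ((∃ j : Fin n, (List.ofFn fun k : Fin r => A (k : ℕ) (h k)).prod i j ≠ 0) ↔
        (∃ s : Fin (r + 1) → Fin n, s 0 = i ∧
          ∀ k : Fin r, g (s k.castSucc) * h k = g (s k.succ))) ∧
      (∀ s : Fin (r + 1) → Fin n, s 0 = i →
        (∀ k : Fin r, g (s k.castSucc) * h k = g (s k.succ)) →
        (∀ j : Fin n, j ≠ s (Fin.last r) →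
          (List.ofFn fun k : Fin r => A (k : ℕ) (h k)).prod i j = 0) ∧
        (List.ofFn fun k : Fin r => A (k : ℕ) (h k)).prod i (s (Fin.last r)) =
          ∏ k : Fin r, MvPolynomial.X ((k : ℕ), s k.castSucc, s k.succ)) := by
  have monomial_ne_zero (s : Fin (r + 1) → Fin n) :
      ∏ k : Fin r, MvPolynomial.X (R := F) ((k : ℕ), s k.castSucc, s k.succ) ≠ 0 :=
    Finset.prod_ne_zero_iff.mpr fun k _ => MvPolynomial.X_ne_zero _
  refine fun i => ⟨⟨fun ⟨j, hj⟩ => ?_, fun ⟨s, hs0, hs⟩ => ?_⟩, fun s hs0 hs => ?_⟩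
  · rw [prod_apply_eq_sum_walks hA] at hj
    obtain ⟨s, hs, -⟩ := Finset.exists_ne_zero_of_sum_ne_zero hj
    simp only [Finset.mem_filter, Finset.mem_univ, true_and] at hs
    exact ⟨s, hs.1, hs.2.2⟩
  · subst hs0
    exact ⟨s (Fin.last r), by simpa [prod_apply_of_isWalk hinj hA hs] using monomial_ne_zero s⟩
  · subst hs0
    exact ⟨fun j hj => by simp [prod_apply_of_isWalk hinj hA hs, hj],
      by simp [prod_apply_of_isWalk hinj hA hs]⟩

/-- If the domain D_ν of ν = ĥ_r ∘ ⋯ ∘ ĥ_1 is nonempty, then the i-th row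
of the product A_{1,h_1}⋯A_{r,h_r} of generic matrices is nonzero iff i ∈ D_ν (i.e. iff
there is a sequence s with s_1 = i and g_{s_k} h_k = g_{s_{k+1}}); in that case the unique
nonzero entry of row i is in column ν(i) = s_{r+1} and equals the single monomial
y¹_{s_1,s_2} y²_{s_2,s_3} ⋯ yʳ_{s_r,s_{r+1}}. -/
theorem stmt_13 (F : Type*) [Field F] (G : Type*) [Group G] (n : ℕ)
    (g : Fin n → G) (hinj : Function.Injective g)
    (r : ℕ) (h : Fin r → G)
    (A : ℕ → G → Matrix (Fin n) (Fin n) (MvPolynomial (ℕ × Fin n × Fin n) F))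
    (hA : ∀ (m : ℕ) (c : G) (p q : Fin n),
      A m c p q = if g p * c = g q then MvPolynomial.X (m, p, q) else 0)
    (hne : ∃ s : Fin (r + 1) → Fin n,
      ∀ k : Fin r, g (s k.castSucc) * h k = g (s k.succ)) :
    ∀ i : Fin n,
      ((∃ j : Fin n, (List.ofFn fun k : Fin r => A (k : ℕ) (h k)).prod i j ≠ 0) ↔
        (∃ s : Fin (r + 1) → Fin n, s 0 = i ∧
          ∀ k : Fin r, g (s k.castSucc) * h k = g (s k.succ))) ∧
      (∀ s : Fin (r + 1) → Fin n, s 0 = i →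
        (∀ k : Fin r, g (s k.castSucc) * h k = g (s k.succ)) →
        (∀ j : Fin n, j ≠ s (Fin.last r) →
          (List.ofFn fun k : Fin r => A (k : ℕ) (h k)).prod i j = 0) ∧
        (List.ofFn fun k : Fin r => A (k : ℕ) (h k)).prod i (s (Fin.last r)) =
          ∏ k : Fin r, MvPolynomial.X ((k : ℕ), s k.castSucc, s k.succ)) :=
  stmt_13_general F G n g hinj r h A hA
end

section
/- A monomial x_{i_1,h_1}^{ε_1} ⋯ x_{i_r,h_r}^{ε_r} (each ε_k either * or nothing) is a (G,*)-identity of M_n(F) with the transpose involution and the elementary grading induced by pairwise distinct (g_1,...,g_n) if and only if the domain of the composed partial map (h_r^{ε_r})^ ∘ ⋯ ∘ (h_1^{ε_1})^ on {1,...,n} is empty, where h^* denotes h^{-1}. -/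
/-!
Entry `(p, q)` of a product `M₁ ⋯ M_r` is a sum over index paths `p = s₀, s₁, …, s_r = q` of
`∏ M_k (s_{k-1}, s_k)`. A homogeneous matrix of degree `c` (and the transpose of one of degree
`c⁻¹`) is supported on the pairs with `g p * c = g q`, so a nonzero product forces a path through
the composed partial map. Conversely, substituting for `x_{i,c}` the 0/1 matrix of the partial map
`ĉ` itself sends row `s₀` of the product to the unit row `e_{s_r}` whenever the path `s` exists.
-/

namespace Matrix

variable {R : Type*} [Semiring R] {n : Type*}

section Products

variable [Fintype n] [DecidableEq n]

theorem mem_span_single_iff {m : Type*} [Fintype m] [DecidableEq m] (P : m → n → Prop)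
    (M : Matrix m n R) :
    M ∈ Submodule.span R {N | ∃ i j, P i j ∧ N = single i j 1} ↔ ∀ i j, ¬ P i j → M i j = 0 := by
  constructor
  · intro hM i j hij
    induction hM using Submodule.span_induction with
    | mem N hN =>
      obtain ⟨i', j', hP, rfl⟩ := hN
      rw [single_apply_of_ne]
      rintro ⟨rfl, rfl⟩
      exact hij hP
    | zero => rfl
    | add _ _ _ _ hx hy => simp [hx, hy]
    | smul _ _ _ hx => simp [hx]
  · intro hM
    rw [matrix_eq_sum_single M]
    refine Submodule.sum_mem _ fun i _ => Submodule.sum_mem _ fun j _ => ?_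
    by_cases hij : P i j
    · rw [← mul_one (M i j), ← smul_eq_mul, ← smul_single]
      exact Submodule.smul_mem _ _ (Submodule.subset_span ⟨i, j, hij, rfl⟩)
    · simp [hM i j hij]

theorem list_ofFn_prod_apply_of_apply_eq_single {r : ℕ} (f : Fin r → Matrix n n R)
    (s : Fin (r + 1) → n) (hf : ∀ k, f k (s k.castSucc) = Pi.single (s k.succ) 1) :
    (List.ofFn f).prod (s 0) = Pi.single (s (Fin.last r)) 1 := by
  induction r with
  | zero => ext q; simp [one_apply, Pi.single_apply, eq_comm]
  | succ r ih =>
    have htail := ih (fun k => f k.succ) (fun k => s k.succ) fun k => by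
      rw [Fin.succ_castSucc]; exact hf k.succ
    have hhead : f 0 (s 0) = Pi.single (s 1) 1 := hf 0
    rw [List.ofFn_succ, List.prod_cons, mul_apply_eq_vecMul, hhead, single_one_vecMul]
    simpa [Fin.succ_last, row] using htail

theorem exists_path_of_list_ofFn_prod_apply_ne_zero {r : ℕ} (f : Fin r → Matrix n n R) {p q : n}
    (h : (List.ofFn f).prod p q ≠ 0) :
    ∃ s : Fin (r + 1) → n, s 0 = p ∧ s (Fin.last r) = q ∧
      ∀ k, f k (s k.castSucc) (s k.succ) ≠ 0 := by
  induction r generalizing p with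
  | zero =>
    obtain rfl : p = q := by
      by_contra hpq
      exact h (one_apply_ne hpq)
    exact ⟨fun _ => p, rfl, rfl, fun k => k.elim0⟩
  | succ r ih =>
    rw [List.ofFn_succ, List.prod_cons, mul_apply] at h
    obtain ⟨j, -, hj⟩ := Finset.exists_ne_zero_of_sum_ne_zero h
    obtain ⟨s, rfl, hlast, hs⟩ := ih (fun k => f k.succ) (right_ne_zero_of_mul hj)
    refine ⟨Fin.cons p s, rfl, by simpa [← Fin.succ_last] using hlast, Fin.cases ?_ fun k => ?_⟩
    · simpa using left_ne_zero_of_mul hj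
    · simpa [← Fin.succ_castSucc] using hs k

end Products

section ElementaryGrading

variable {G : Type*} [Group G] {g : n → G} {c : G}

-- The matrix of the partial map `ĉ` (with `g p * c = g (ĉ p)`), a substitution of degree `c`.
variable (R g c) in
def elementaryShift [DecidableEq G] : Matrix n n R :=
  of fun p q => if g p * c = g q then 1 else 0

theorem ite_transpose_elementaryShift [DecidableEq G] (e : Bool) :
    (if e then (elementaryShift R g c)ᵀ else elementaryShift R g c) =
      elementaryShift R g (if e then c⁻¹ else c) := by
  cases e
  · rfl
  · ext p q
    simp only [elementaryShift, transpose_apply, of_apply, if_true, eq_mul_inv_iff_mul_eq, eq_comm]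

variable [DecidableEq n]

theorem elementaryShift_apply_of_mul_eq [DecidableEq G] (hg : Function.Injective g) {p q : n}
    (hpq : g p * c = g q) : elementaryShift R g c p = Pi.single q 1 := by
  ext q'
  simp only [elementaryShift, of_apply, hpq, hg.eq_iff, Pi.single_apply, eq_comm]

variable (R g c) in
def elementaryComponent : Submodule R (Matrix n n R) :=
  Submodule.span R {M | ∃ i j, (g i)⁻¹ * g j = c ∧ M = single i j 1}

variable [Fintype n] {M : Matrix n n R}

theorem mem_elementaryComponent_iff :
    M ∈ elementaryComponent R g c ↔ ∀ p q, g p * c ≠ g q → M p q = 0 := by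
  simp only [elementaryComponent, mem_span_single_iff, inv_mul_eq_iff_eq_mul, ne_comm]

theorem mul_eq_of_mem_elementaryComponent (hM : M ∈ elementaryComponent R g c) {p q : n}
    (hpq : M p q ≠ 0) : g p * c = g q := by
  by_contra hne
  exact hpq (mem_elementaryComponent_iff.1 hM p q hne)

theorem transpose_mem_elementaryComponent (hM : M ∈ elementaryComponent R g c) :
    Mᵀ ∈ elementaryComponent R g c⁻¹ := by
  rw [mem_elementaryComponent_iff] at hM ⊢
  intro p q hpq
  exact hM q p fun h => hpq (by rw [← h, mul_inv_cancel_right])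

theorem ite_transpose_mem_elementaryComponent (e : Bool) (hM : M ∈ elementaryComponent R g c) :
    (if e then Mᵀ else M) ∈ elementaryComponent R g (if e then c⁻¹ else c) := by
  cases e
  · exact hM
  · exact transpose_mem_elementaryComponent hM

variable (R g c) in
theorem elementaryShift_mem [DecidableEq G] : elementaryShift R g c ∈ elementaryComponent R g c :=
  mem_elementaryComponent_iff.2 fun _ _ hpq => if_neg hpq

end ElementaryGrading

end Matrix

open Matrix

theorem stmt_14_general (F : Type*) [Field F] (G : Type*) [Group G] (n : ℕ)
    (g : Fin n → G) (hinj : Function.Injective g)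
    (R : G → Submodule F (Matrix (Fin n) (Fin n) F))
    (hR : ∀ c : G, R c = Submodule.span F
      {M : Matrix (Fin n) (Fin n) F | ∃ i j : Fin n,
        (g i)⁻¹ * g j = c ∧ M = Matrix.single i j 1})
    (r : ℕ) (idx : Fin r → ℕ) (h : Fin r → G) (ε : Fin r → Bool) :
    (∀ a : ℕ × G → Matrix (Fin n) (Fin n) F, (∀ k c, a (k, c) ∈ R c) →
      (List.ofFn fun k : Fin r =>
        if ε k then (a (idx k, h k))ᵀ else a (idx k, h k)).prod = 0) ↔
    ¬ ∃ s : Fin (r + 1) → Fin n,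
        ∀ k : Fin r, g (s k.castSucc) * (if ε k then (h k)⁻¹ else h k) = g (s k.succ) := by
  classical
  obtain rfl : R = fun c => elementaryComponent F g c := funext hR
  constructor
  · rintro hid ⟨s, hs⟩
    have hprod := hid (fun x => elementaryShift F g x.2) fun _ c => elementaryShift_mem F g c
    have hrows : ∀ k, (if ε k then (elementaryShift F g (h k))ᵀ else elementaryShift F g (h k))
        (s k.castSucc) = Pi.single (s k.succ) 1 := fun k => by
      rw [ite_transpose_elementaryShift]
      exact elementaryShift_apply_of_mul_eq hinj (hs k)
    have hrow := list_ofFn_prod_apply_of_apply_eq_single _ s hrows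
    rw [hprod] at hrow
    simpa using congrFun hrow (s (Fin.last r))
  · rintro hnone a ha
    refine Matrix.ext fun p q => ?_
    by_contra hpq
    obtain ⟨s, -, -, hs⟩ := exists_path_of_list_ofFn_prod_apply_ne_zero _ hpq
    exact hnone ⟨s, fun k => mul_eq_of_mem_elementaryComponent
      (ite_transpose_mem_elementaryComponent (ε k) (ha _ _)) (hs k)⟩

/-- A monomial x_{i_1,h_1}^{ε_1} ⋯ x_{i_r,h_r}^{ε_r} is a (G,*)-identity
of M_n(F) (transpose involution, elementary grading by pairwise distinct g_1,...,g_n)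
iff the domain of the composed partial map (h_r^{ε_r})^ ∘ ⋯ ∘ (h_1^{ε_1})^ is empty,
where h^* = h⁻¹. -/
theorem stmt_14 (F : Type*) [Field F] [Infinite F] (G : Type*) [Group G] (n : ℕ)
    (g : Fin n → G) (hinj : Function.Injective g)
    (R : G → Submodule F (Matrix (Fin n) (Fin n) F))
    (hR : ∀ c : G, R c = Submodule.span F
      {M : Matrix (Fin n) (Fin n) F | ∃ i j : Fin n,
        (g i)⁻¹ * g j = c ∧ M = Matrix.single i j 1})
    (r : ℕ) (idx : Fin r → ℕ) (h : Fin r → G) (ε : Fin r → Bool) :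
    (∀ a : ℕ × G → Matrix (Fin n) (Fin n) F, (∀ k c, a (k, c) ∈ R c) →
      (List.ofFn fun k : Fin r =>
        if ε k then (a (idx k, h k))ᵀ else a (idx k, h k)).prod = 0) ↔
    ¬ ∃ s : Fin (r + 1) → Fin n,
        ∀ k : Fin r, g (s k.castSucc) * (if ε k then (h k)⁻¹ else h k) = g (s k.succ) :=
  stmt_14_general F G n g hinj R hR r idx h ε
end

section
/- A monomial x_{i_1,h_1}^{ε_1} ⋯ x_{i_r,h_r}^{ε_r} is a (G,*)-identity of M_n(F) (transpose involution, elementary grading by pairwise distinct g_1,...,g_n) if and only if the ordinary graded monomial x_{i_1, h_1^{ε_1}} ⋯ x_{i_r, h_r^{ε_r}} (where h^* := h^{-1}) is a G-graded identity of M_n(F). -/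
/-!
A matrix of degree `c` is supported on the positions `(i, j)` with `(g i)⁻¹ * g j = c`, and
transposition maps degree `c` to degree `c⁻¹`, so each starred factor may be traded for a factor
of the inverse degree. Because the `g i` are distinct, a product of homogeneous matrices of degrees
`c₁, …, c_r` has at most one path `p = i₀ → i₁ → ⋯ → i_r = q` contributing to its `(p, q)` entry.
Hence the monomial vanishes identically exactly when the product of the 0/1 matrices filling
the supports of `c₁, …, c_r` vanishes, and this condition only sees the degrees.
-/

open Matrix

namespace Matrix

variable {ι : Type*} {G : Type*} [Group G] (α : Type*) [Semiring α]

def elemGradedComponent (g : ι → G) (c : G) : Submodule α (Matrix ι ι α) where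
  carrier := {M | ∀ i j, (g i)⁻¹ * g j ≠ c → M i j = 0}
  zero_mem' _ _ _ := rfl
  add_mem' hM hN i j hij := by simp [hM i j hij, hN i j hij]
  smul_mem' a M hM i j hij := by simp [hM i j hij]

def elemGradedIndicator [DecidableEq G] (g : ι → G) (c : G) : Matrix ι ι α :=
  of fun i j => if (g i)⁻¹ * g j = c then 1 else 0

variable {α}

theorem elemGradedIndicator_mem [DecidableEq G] (g : ι → G) (c : G) :
    elemGradedIndicator α g c ∈ elemGradedComponent α g c := fun i j hij => by
  simp [elemGradedIndicator, hij]

theorem transpose_elemGradedIndicator [DecidableEq G] (g : ι → G) (c : G) :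
    (elemGradedIndicator α g c)ᵀ = elemGradedIndicator α g c⁻¹ := by
  ext i j
  simp [elemGradedIndicator, ← inv_eq_iff_eq_inv]

theorem transpose_mem_elemGradedComponent {g : ι → G} {c : G} {M : Matrix ι ι α}
    (hM : M ∈ elemGradedComponent α g c) : Mᵀ ∈ elemGradedComponent α g c⁻¹ := by
  intro i j hij
  refine hM j i fun hji => hij ?_
  simp [← hji]

theorem span_single_eq_elemGradedComponent [Fintype ι] [DecidableEq ι] (g : ι → G) (c : G) :
    Submodule.span α {M | ∃ i j, (g i)⁻¹ * g j = c ∧ M = single i j 1} =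
      elemGradedComponent α g c := by
  apply le_antisymm
  · rw [Submodule.span_le]
    rintro _ ⟨i, j, rfl, rfl⟩ i' j' hij
    by_cases h : i = i' ∧ j = j'
    · obtain ⟨rfl, rfl⟩ := h
      exact absurd rfl hij
    · exact single_apply_of_ne _ _ _ _ _ h
  · intro M hM
    rw [matrix_eq_sum_single M]
    refine Submodule.sum_mem _ fun i _ => Submodule.sum_mem _ fun j _ => ?_
    by_cases hij : (g i)⁻¹ * g j = c
    · rw [← mul_one (M i j), ← smul_eq_mul, ← smul_single]
      exact Submodule.smul_mem _ _ (Submodule.subset_span ⟨i, j, hij, rfl⟩)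
    · rw [hM i j hij, single_zero]
      exact Submodule.zero_mem _

variable [Fintype ι] [DecidableEq G] {g : ι → G}

theorem elemGradedIndicator_mul_apply (hg : Function.Injective g) {c : G} {p j : ι}
    (hj : (g p)⁻¹ * g j = c) (X : Matrix ι ι α) (q : ι) :
    (elemGradedIndicator α g c * X) p q = X j q := by
  rw [mul_apply, Finset.sum_eq_single j]
  · simp [elemGradedIndicator, hj]
  · intro j' _ hj'
    have : (g p)⁻¹ * g j' ≠ c := fun h => hj' (hg (mul_left_cancel (h.trans hj.symm)))
    simp [elemGradedIndicator, this]
  · simp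

theorem list_prod_ofFn_apply_ne_zero [DecidableEq ι] (hg : Function.Injective g) :
    ∀ {r : ℕ} (c : Fin r → G) (M : Fin r → Matrix ι ι α),
      (∀ k, M k ∈ elemGradedComponent α g (c k)) → ∀ p q,
      (List.ofFn M).prod p q ≠ 0 →
        (List.ofFn fun k => elemGradedIndicator α g (c k)).prod p q ≠ 0
  | 0, _, _, _, p, q, h => by simpa using h
  | r + 1, c, M, hM, p, q, h => by
    rw [List.ofFn_succ, List.prod_cons, mul_apply] at h ⊢
    obtain ⟨j, -, hj⟩ := Finset.exists_ne_zero_of_sum_ne_zero h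
    obtain ⟨hpj, hjq⟩ := ne_zero_and_ne_zero_of_mul hj
    have hdeg : (g p)⁻¹ * g j = c 0 := not_not.mp fun hne => hpj (hM 0 p j hne)
    rw [← mul_apply, elemGradedIndicator_mul_apply hg hdeg]
    exact list_prod_ofFn_apply_ne_zero hg (fun k => c k.succ) (fun k => M k.succ)
      (fun k => hM k.succ) j q hjq

theorem list_prod_ofFn_eq_zero_of_indicator [DecidableEq ι] (hg : Function.Injective g) {r : ℕ}
    (c : Fin r → G) (M : Fin r → Matrix ι ι α) (hM : ∀ k, M k ∈ elemGradedComponent α g (c k))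
    (h : (List.ofFn fun k => elemGradedIndicator α g (c k)).prod = 0) :
    (List.ofFn M).prod = 0 := by
  ext p q
  by_contra hpq
  exact list_prod_ofFn_apply_ne_zero hg c M hM p q hpq (by rw [h]; rfl)

end Matrix

theorem stmt_15_general (F : Type*) [Field F] (G : Type*) [Group G] (n : ℕ)
    (g : Fin n → G) (hinj : Function.Injective g)
    (R : G → Submodule F (Matrix (Fin n) (Fin n) F))
    (hR : ∀ c : G, R c = Submodule.span F
      {M : Matrix (Fin n) (Fin n) F | ∃ i j : Fin n,
        (g i)⁻¹ * g j = c ∧ M = Matrix.single i j 1})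
    (r : ℕ) (idx : Fin r → ℕ) (h : Fin r → G) (ε : Fin r → Bool) :
    (∀ a : ℕ × G → Matrix (Fin n) (Fin n) F, (∀ k c, a (k, c) ∈ R c) →
      (List.ofFn fun k : Fin r =>
        if ε k then (a (idx k, h k))ᵀ else a (idx k, h k)).prod = 0) ↔
    (∀ b : ℕ × G → Matrix (Fin n) (Fin n) F, (∀ k c, b (k, c) ∈ R c) →
      (List.ofFn fun k : Fin r =>
        b (idx k, if ε k then (h k)⁻¹ else h k)).prod = 0) := by
  classical
  have hR' : ∀ c, R c = elemGradedComponent F g c := fun c =>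
    (hR c).trans (span_single_eq_elemGradedComponent g c)
  simp only [hR']
  set c : Fin r → G := fun k => if ε k then (h k)⁻¹ else h k
  set S : ℕ × G → Matrix (Fin n) (Fin n) F := fun x => elemGradedIndicator F g x.2
  have hS : ∀ k d, S (k, d) ∈ elemGradedComponent F g d := fun _ => elemGradedIndicator_mem g
  constructor
  · intro H b hb
    refine list_prod_ofFn_eq_zero_of_indicator hinj c _ (fun k => hb _ _) ?_
    convert H S hS using 3
    ext1 k
    by_cases hk : ε k <;> simp [S, c, hk, transpose_elemGradedIndicator]
  · intro H a ha
    refine list_prod_ofFn_eq_zero_of_indicator hinj c _ (fun k => ?_) (H S hS)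
    by_cases hk : ε k
    · simpa [c, hk] using transpose_mem_elemGradedComponent (ha (idx k) (h k))
    · simpa [c, hk] using ha (idx k) (h k)

/-- A monomial x_{i_1,h_1}^{ε_1} ⋯ x_{i_r,h_r}^{ε_r} is a (G,*)-identity
of M_n(F) (transpose involution, elementary grading by pairwise distinct g_1,...,g_n)
iff the ordinary graded monomial x_{i_1,h_1^{ε_1}} ⋯ x_{i_r,h_r^{ε_r}} (h^* := h⁻¹)
is a G-graded identity of M_n(F). -/
theorem stmt_15 (F : Type*) [Field F] [Infinite F] (G : Type*) [Group G] (n : ℕ)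
    (g : Fin n → G) (hinj : Function.Injective g)
    (R : G → Submodule F (Matrix (Fin n) (Fin n) F))
    (hR : ∀ c : G, R c = Submodule.span F
      {M : Matrix (Fin n) (Fin n) F | ∃ i j : Fin n,
        (g i)⁻¹ * g j = c ∧ M = Matrix.single i j 1})
    (r : ℕ) (idx : Fin r → ℕ) (h : Fin r → G) (ε : Fin r → Bool) :
    (∀ a : ℕ × G → Matrix (Fin n) (Fin n) F, (∀ k c, a (k, c) ∈ R c) →
      (List.ofFn fun k : Fin r =>
        if ε k then (a (idx k, h k))ᵀ else a (idx k, h k)).prod = 0) ↔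
    (∀ b : ℕ × G → Matrix (Fin n) (Fin n) F, (∀ k c, b (k, c) ∈ R c) →
      (List.ofFn fun k : Fin r =>
        b (idx k, if ε k then (h k)⁻¹ else h k)).prod = 0) :=
  stmt_15_general F G n g hinj R hR r idx h ε
end

section
/- If a graded monomial x_{i_1,h_1} ⋯ x_{i_p,h_p} is a graded identity of M_n(F) with an elementary G-grading, then it is a consequence (lies in the T_G-ideal generated by) of a graded monomial identity of M_n(F) of length at most 2n−1. -/
open Matrix

noncomputable section

/-- The free G-graded algebra: the monoid algebra of the free monoid on the graded
variables x_{k,g}, (k,g) ∈ ℕ × G. -/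
abbrev FreeG (F G : Type*) [Field F] := MonoidAlgebra F (FreeMonoid (ℕ × G))

/-- Degree of a word in the graded variables. -/
def wdeg {G : Type*} [Group G] (w : FreeMonoid (ℕ × G)) : G :=
  ((FreeMonoid.toList w).map Prod.snd).prod

/-- The graded substitution endomorphism determined by a map on variables. -/
def substHom {F G : Type*} [Field F] (v : ℕ × G → FreeG F G) : FreeG F G →ₐ[F] FreeG F G :=
  MonoidAlgebra.lift F (FreeG F G) (FreeMonoid (ℕ × G)) (FreeMonoid.lift v)

/-- A substitution is admissible when each variable of degree g is sent to a
homogeneous element of degree g. -/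
def Admissible {F G : Type*} [Field F] [Group G] (v : ℕ × G → FreeG F G) : Prop :=
  ∀ (k : ℕ) (c : G), ∀ w ∈ (v (k, c)).coeff.support, wdeg w = c

/-- The T_G-ideal generated by a set S: the smallest two-sided ideal containing all
admissible substitution instances of elements of S. -/
def TIdealGen {F G : Type*} [Field F] [Group G] (S : Set (FreeG F G)) : Set (FreeG F G) :=
  {x | ∀ I : TwoSidedIdeal (FreeG F G),
    (∀ f ∈ S, ∀ v, Admissible v → substHom v f ∈ I) → x ∈ I}

/-- The homogeneous component of degree c of the elementary grading of M_n(F). -/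
def gradeR (F : Type*) {G : Type*} [Field F] [Group G] {n : ℕ} (g : Fin n → G) (c : G) :
    Submodule F (Matrix (Fin n) (Fin n) F) :=
  Submodule.span F {M : Matrix (Fin n) (Fin n) F | ∃ i j : Fin n,
    (g i)⁻¹ * g j = c ∧ M = Matrix.single i j 1}

/-- Evaluation of the free graded algebra on a substitution of the variables by
matrices. -/
def evalHom {F G : Type*} [Field F] {n : ℕ} (a : ℕ × G → Matrix (Fin n) (Fin n) F) :
    FreeG F G →ₐ[F] Matrix (Fin n) (Fin n) F :=
  MonoidAlgebra.lift F (Matrix (Fin n) (Fin n) F) (FreeMonoid (ℕ × G)) (FreeMonoid.lift a)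

/-- f is a G-graded polynomial identity of M_n(F) with the elementary grading
induced by g. -/
def IsGId {F G : Type*} [Field F] [Group G] {n : ℕ} (g : Fin n → G) (f : FreeG F G) : Prop :=
  ∀ a : ℕ × G → Matrix (Fin n) (Fin n) F,
    (∀ k c, a (k, c) ∈ gradeR F g c) → evalHom a f = 0

/-!
A product of homogeneous matrix units is nonzero only along a path of indices
`i, m₁, m₂, …` with `g mₜ = g i * h₁ ⋯ hₜ`, and choosing representatives of the fibres of `g`
realises every such path. So the monomial is an identity iff every starting degree `x` has an
exit time `t` with `x * h₁ ⋯ hₜ ∉ g(Fin n)`. Pick an exit time for each of the at most `n`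
values `x = g i`, cut the monomial at these times and replace each segment by one variable of
the segment's degree. The new monomial has the same exit times, so it is an identity; it has at
most `n ≤ 2n - 1` letters; and substituting the segments back recovers the original monomial up
to a right factor.
-/

lemma List.extract_append_extract {α : Type*} (l : List α) {a b c : ℕ} (hab : a ≤ b)
    (hbc : b ≤ c) : l.extract a b ++ l.extract b c = l.extract a c := by
  simp only [List.extract_eq_take_drop]
  rw [show c - a = (b - a) + (c - b) by omega, List.take_add, List.drop_drop,
    Nat.add_sub_cancel' hab]

namespace GradedMonomial

variable {F G : Type*} [Field F] {n : ℕ}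

lemma evalHom_monomial (a : ℕ × G → Matrix (Fin n) (Fin n) F) (l : List (ℕ × G)) :
    evalHom a (MonoidAlgebra.of F _ (FreeMonoid.ofList l)) = (l.map a).prod := by
  rw [evalHom, MonoidAlgebra.lift_of, FreeMonoid.lift_ofList]

variable [Group G]

lemma wdeg_ofList (l : List (ℕ × G)) : wdeg (FreeMonoid.ofList l) = (l.map Prod.snd).prod := by
  rw [wdeg, FreeMonoid.toList_ofList]

@[simp]
lemma wdeg_of (x : ℕ × G) : wdeg (FreeMonoid.of x) = x.2 := by simp [wdeg]

def prefixDeg (l : List (ℕ × G)) (t : ℕ) : G := ((l.take t).map Prod.snd).prod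

@[simp]
lemma prefixDeg_zero (l : List (ℕ × G)) : prefixDeg l 0 = 1 := rfl

@[simp]
lemma prefixDeg_nil (t : ℕ) : prefixDeg ([] : List (ℕ × G)) t = 1 := by simp [prefixDeg]

lemma prefixDeg_cons_succ (x : ℕ × G) (l : List (ℕ × G)) (t : ℕ) :
    prefixDeg (x :: l) (t + 1) = x.2 * prefixDeg l t := by simp [prefixDeg]

lemma prefixDeg_mul_extract (l : List (ℕ × G)) {a b : ℕ} (hab : a ≤ b) :
    prefixDeg l a * ((l.extract a b).map Prod.snd).prod = prefixDeg l b := by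
  have htake : l.take a ++ l.extract a b = l.take b := by
    simpa using l.extract_append_extract (Nat.zero_le a) hab
  rw [prefixDeg, prefixDeg, ← htake, List.map_append, List.prod_append]

/-- The segment `l[a, b)` as a new variable of the segment's degree; the index `Nat.pair a b`
keeps the variables of different segments distinct. -/
def segmentVar (l : List (ℕ × G)) (a b : ℕ) : ℕ × G :=
  (Nat.pair a b, ((l.extract a b).map Prod.snd).prod)

def collapse (l : List (ℕ × G)) : ℕ → List ℕ → List (ℕ × G)
  | _, [] => []
  | a, b :: ts => segmentVar l a b :: collapse l b ts

lemma length_collapse (l : List (ℕ × G)) : ∀ (a : ℕ) (ts : List ℕ),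
    (collapse l a ts).length = ts.length
  | _, [] => rfl
  | _, b :: ts => congrArg Nat.succ (length_collapse l b ts)

open Classical in
def segmentSubst (l : List (ℕ × G)) (x : ℕ × G) : FreeMonoid (ℕ × G) :=
  if segmentVar l (Nat.unpair x.1).1 (Nat.unpair x.1).2 = x then
    FreeMonoid.ofList (l.extract (Nat.unpair x.1).1 (Nat.unpair x.1).2)
  else FreeMonoid.of x

lemma segmentSubst_segmentVar (l : List (ℕ × G)) (a b : ℕ) :
    segmentSubst l (segmentVar l a b) = FreeMonoid.ofList (l.extract a b) := by
  simp [segmentSubst, segmentVar]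

lemma wdeg_segmentSubst (l : List (ℕ × G)) (x : ℕ × G) : wdeg (segmentSubst l x) = x.2 := by
  unfold segmentSubst
  split_ifs with hx
  · rw [wdeg_ofList]
    exact congrArg Prod.snd hx
  · exact wdeg_of x

lemma lift_segmentSubst_collapse (l : List (ℕ × G)) : ∀ (a : ℕ) (ts : List ℕ),
    (a :: ts).Pairwise (· ≤ ·) →
      FreeMonoid.lift (segmentSubst l) (FreeMonoid.ofList (collapse l a ts)) =
        FreeMonoid.ofList (l.extract a (ts.getLastD a))
  | a, [], _ => by simp [collapse]
  | a, b :: ts, hsorted => by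
    obtain ⟨hab, hbts⟩ := List.pairwise_cons.mp hsorted
    have hb_last : b ≤ ts.getLastD b :=
      List.forall_mem_cons.mpr ⟨le_refl b, (List.pairwise_cons.mp hbts).1⟩ _
        List.getLastD_mem_cons
    rw [collapse, FreeMonoid.ofList_cons, map_mul, FreeMonoid.lift_eval_of,
      segmentSubst_segmentVar, lift_segmentSubst_collapse l b ts hbts, ← FreeMonoid.ofList_append,
      l.extract_append_extract (hab b List.mem_cons_self) hb_last, List.getLastD_cons]

lemma exists_prefixDeg_collapse (l : List (ℕ × G)) : ∀ (a : ℕ) (ts : List ℕ),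
    (a :: ts).Pairwise (· ≤ ·) →
      ∀ t ∈ ts, ∃ u, prefixDeg l a * prefixDeg (collapse l a ts) u = prefixDeg l t
  | _, [], _ => by simp
  | a, b :: ts, hsorted => by
    obtain ⟨hab, hbts⟩ := List.pairwise_cons.mp hsorted
    have hstep : prefixDeg l a * (segmentVar l a b).2 = prefixDeg l b :=
      prefixDeg_mul_extract l (hab b List.mem_cons_self)
    rintro t (_ | ⟨_, ht⟩)
    · exact ⟨1, by simpa [collapse, prefixDeg_cons_succ] using hstep⟩
    · obtain ⟨u, hu⟩ := exists_prefixDeg_collapse l b ts hbts t ht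
      exact ⟨u + 1, by rw [collapse, prefixDeg_cons_succ, ← mul_assoc, hstep, hu]⟩

lemma mem_gradeR_iff {g : Fin n → G} {c : G} {M : Matrix (Fin n) (Fin n) F} :
    M ∈ gradeR F g c ↔ ∀ i j, M i j ≠ 0 → (g i)⁻¹ * g j = c := by
  constructor
  · intro hM
    induction hM using Submodule.span_induction with
    | mem M hM =>
      obtain ⟨i, j, hij, rfl⟩ := hM
      intro i' j' hne
      obtain ⟨rfl, rfl⟩ : i = i' ∧ j = j' := by
        by_contra h
        exact hne (Matrix.single_apply_of_ne _ _ _ _ _ h)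
      exact hij
    | zero => simp
    | add M N _ _ ihM ihN =>
      intro i j hne
      by_cases hMij : M i j = 0
      · exact ihN i j (by simpa [hMij] using hne)
      · exact ihM i j hMij
    | smul r M _ ih => exact fun i j hne => ih i j (right_ne_zero_of_mul hne)
  · intro hM
    rw [Matrix.matrix_eq_sum_single M]
    refine Submodule.sum_mem _ fun i _ => Submodule.sum_mem _ fun j _ => ?_
    by_cases hMij : M i j = 0
    · simp [hMij]
    · rw [← mul_one (M i j), ← smul_eq_mul, ← Matrix.smul_single]
      exact Submodule.smul_mem _ _ (Submodule.subset_span ⟨i, j, hM i j hMij, rfl⟩)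

lemma mul_prefixDeg_mem_range {g : Fin n → G} {a : ℕ × G → Matrix (Fin n) (Fin n) F}
    (ha : ∀ k c, a (k, c) ∈ gradeR F g c) :
    ∀ (l : List (ℕ × G)) {i j : Fin n}, (l.map a).prod i j ≠ 0 →
      ∀ t, g i * prefixDeg l t ∈ Set.range g
  | [], i, _, _, _ => ⟨i, by simp⟩
  | _, i, _, _, 0 => ⟨i, by simp⟩
  | x :: l, i, j, hij, t + 1 => by
    rw [List.map_cons, List.prod_cons, Matrix.mul_apply] at hij
    obtain ⟨m, -, hm⟩ := Finset.exists_ne_zero_of_sum_ne_zero hij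
    have hgm : g m = g i * x.2 :=
      inv_mul_eq_iff_eq_mul.mp (mem_gradeR_iff.mp (ha x.1 x.2) i m (left_ne_zero_of_mul hm))
    rw [prefixDeg_cons_succ, ← mul_assoc, ← hgm]
    exact mul_prefixDeg_mem_range ha l (right_ne_zero_of_mul hm) t

section Representatives

variable (F) in
open Classical in
/-- Only matrix units between chosen representatives of the fibres of `g` are used, so that each
row of a product of these matrices is a standard unit vector or zero. -/
def reprSubst (g : Fin n → G) [Nonempty (Fin n)] (c : G) : Matrix (Fin n) (Fin n) F :=
  Matrix.of fun i j =>
    if Function.invFun g (g i) = i ∧ Function.invFun g (g j) = j ∧ (g i)⁻¹ * g j = c then 1 else 0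

variable {g : Fin n → G} [Nonempty (Fin n)]

lemma reprSubst_mem_gradeR (c : G) : reprSubst F g c ∈ gradeR F g c :=
  mem_gradeR_iff.mpr fun i j hij => by
    by_contra hc
    exact hij (by simp [reprSubst, hc])

lemma reprSubst_row {x c : G} (hx : x ∈ Set.range g) (hxc : x * c ∈ Set.range g) :
    reprSubst F g c (Function.invFun g x) = Pi.single (Function.invFun g (x * c)) 1 := by
  have hgx : g (Function.invFun g x) = x := Function.invFun_eq hx
  ext j
  by_cases hj : j = Function.invFun g (x * c)
  · subst hj
    simp [reprSubst, hgx, Function.invFun_eq hxc]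
  · rw [Pi.single_apply, if_neg hj]
    refine if_neg fun ⟨_, hjj, hdeg⟩ => hj ?_
    rw [← hjj, ← inv_mul_eq_iff_eq_mul.mp (hgx ▸ hdeg)]

lemma reprSubst_prod_row :
    ∀ (l : List (ℕ × G)) {x : G}, (∀ t, x * prefixDeg l t ∈ Set.range g) →
      (l.map fun y => reprSubst F g y.2).prod (Function.invFun g x) =
        Pi.single (Function.invFun g (x * prefixDeg l l.length)) 1
  | [], x, _ => by
    ext j
    simp [Matrix.one_apply, Pi.single_apply, eq_comm]
  | y :: l, x, hx => by
    have hx0 : x ∈ Set.range g := by simpa using hx 0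
    have hx1 : x * y.2 ∈ Set.range g := by simpa [prefixDeg] using hx 1
    have hxl : ∀ t, x * y.2 * prefixDeg l t ∈ Set.range g := fun t => by
      simpa [prefixDeg_cons_succ, mul_assoc] using hx (t + 1)
    rw [List.map_cons, List.prod_cons, Matrix.mul_apply_eq_vecMul, reprSubst_row hx0 hx1,
      Matrix.single_one_vecMul, Matrix.row, reprSubst_prod_row l hxl, List.length_cons,
      prefixDeg_cons_succ, mul_assoc]

end Representatives

theorem isGId_monomial_iff {g : Fin n → G} (l : List (ℕ × G)) :
    IsGId g (MonoidAlgebra.of F _ (FreeMonoid.ofList l) : FreeG F G) ↔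
      ∀ x, ∃ t, x * prefixDeg l t ∉ Set.range g := by
  constructor
  · intro hid
    by_contra! hcover
    obtain ⟨x, hx⟩ := hcover
    have : Nonempty (Fin n) := ⟨(by simpa using hx 0 : x ∈ Set.range g).choose⟩
    have hzero := hid (fun y => reprSubst F g y.2) fun _ c => reprSubst_mem_gradeR c
    rw [evalHom_monomial] at hzero
    have hrow := congrFun (congrFun hzero (Function.invFun g x))
      (Function.invFun g (x * prefixDeg l l.length))
    rw [reprSubst_prod_row l hx] at hrow
    simp at hrow
  · intro hnc a ha
    rw [evalHom_monomial]
    ext i j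
    by_contra hij
    obtain ⟨t, ht⟩ := hnc (g i)
    exact ht (mul_prefixDeg_mem_range ha l hij t)

lemma admissible_of_wdeg {ρ : ℕ × G → FreeMonoid (ℕ × G)} (hρ : ∀ x, wdeg (ρ x) = x.2) :
    Admissible fun x => (MonoidAlgebra.of F _ (ρ x) : FreeG F G) := by
  intro k c w hw
  dsimp only at hw
  rw [MonoidAlgebra.of_apply, MonoidAlgebra.coeff_single] at hw
  rw [Finset.mem_singleton.mp (Finsupp.support_single_subset hw)]
  exact hρ (k, c)

lemma of_mul_lift_mul_mem_tIdealGen {ρ : ℕ × G → FreeMonoid (ℕ × G)}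
    (hρ : ∀ x, wdeg (ρ x) = x.2) (u w u' : FreeMonoid (ℕ × G)) :
    (MonoidAlgebra.of F _ (u * FreeMonoid.lift ρ w * u') : FreeG F G) ∈
      TIdealGen {(MonoidAlgebra.of F _ w : FreeG F G)} := by
  intro I hI
  have hsubst := hI _ rfl _ (admissible_of_wdeg hρ)
  have hlift : FreeMonoid.lift (fun x => (MonoidAlgebra.of F _ (ρ x) : FreeG F G)) w =
      MonoidAlgebra.of F _ (FreeMonoid.lift ρ w) := by
    rw [← MonoidHom.comp_apply, FreeMonoid.comp_lift]
    rfl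
  rw [substHom, MonoidAlgebra.lift_of, hlift] at hsubst
  rw [map_mul, map_mul]
  exact I.mul_mem_right _ _ (I.mul_mem_left _ _ hsubst)

lemma monomial_mem_tIdealGen_collapse (l : List (ℕ × G)) (ts : List ℕ)
    (hsorted : (0 :: ts).Pairwise (· ≤ ·)) :
    (MonoidAlgebra.of F _ (FreeMonoid.ofList l) : FreeG F G) ∈
      TIdealGen {(MonoidAlgebra.of F _ (FreeMonoid.ofList (collapse l 0 ts)) : FreeG F G)} := by
  have hl : FreeMonoid.ofList l = 1 * FreeMonoid.lift (segmentSubst l)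
      (FreeMonoid.ofList (collapse l 0 ts)) * FreeMonoid.ofList (l.drop (ts.getLastD 0)) := by
    rw [lift_segmentSubst_collapse l 0 ts hsorted, one_mul, ← FreeMonoid.ofList_append]
    simp
  rw [hl]
  exact of_mul_lift_mul_mem_tIdealGen (wdeg_segmentSubst l) _ _ _

lemma isGId_collapse {g : Fin n → G} (l : List (ℕ × G)) (ts : List ℕ)
    (hsorted : (0 :: ts).Pairwise (· ≤ ·))
    (hcut : ∀ x ∈ Set.range g, ∃ t ∈ ts, x * prefixDeg l t ∉ Set.range g) :
    IsGId g (MonoidAlgebra.of F _ (FreeMonoid.ofList (collapse l 0 ts)) : FreeG F G) := by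
  refine (isGId_monomial_iff _).mpr fun x => ?_
  by_cases hx : x ∈ Set.range g
  · obtain ⟨t, ht, hxt⟩ := hcut x hx
    obtain ⟨u, hu⟩ := exists_prefixDeg_collapse l 0 ts hsorted t ht
    exact ⟨u, by rw [prefixDeg_zero, one_mul] at hu; rwa [hu]⟩
  · exact ⟨0, by rwa [prefixDeg_zero, mul_one]⟩

end GradedMonomial

open GradedMonomial

theorem stmt_16_general (F : Type*) [Field F] (G : Type*) [Group G] (n : ℕ)
    (g : Fin n → G)
    (p : ℕ) (idx : Fin p → ℕ) (h : Fin p → G)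
    (hid : IsGId g (MonoidAlgebra.of F (FreeMonoid (ℕ × G))
      (FreeMonoid.ofList (List.ofFn fun k : Fin p => (idx k, h k))) : FreeG F G)) :
    ∃ w : FreeMonoid (ℕ × G),
      (FreeMonoid.toList w).length ≤ 2 * n - 1 ∧
      IsGId g (MonoidAlgebra.of F (FreeMonoid (ℕ × G)) w : FreeG F G) ∧
      (MonoidAlgebra.of F (FreeMonoid (ℕ × G))
        (FreeMonoid.ofList (List.ofFn fun k : Fin p => (idx k, h k))) : FreeG F G)
        ∈ TIdealGen {(MonoidAlgebra.of F (FreeMonoid (ℕ × G)) w : FreeG F G)} := by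
  set l : List (ℕ × G) := List.ofFn fun k : Fin p => (idx k, h k)
  choose cut hcut using fun i => (isGId_monomial_iff l).mp hid (g i)
  set ts := (Finset.univ.image cut).sort (· ≤ ·)
  have hsorted : (0 :: ts).Pairwise (· ≤ ·) :=
    List.pairwise_cons.mpr ⟨fun _ _ => Nat.zero_le _, Finset.pairwise_sort _ _⟩
  refine ⟨FreeMonoid.ofList (collapse l 0 ts), ?_, isGId_collapse l ts hsorted ?_,
    monomial_mem_tIdealGen_collapse l ts hsorted⟩
  · have hcard : ts.length ≤ n := by
      rw [Finset.length_sort]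
      exact Finset.card_image_le.trans (Finset.card_fin n).le
    rw [FreeMonoid.toList_ofList, length_collapse]
    omega
  · rintro _ ⟨i, rfl⟩
    exact ⟨cut i, by simp [ts], hcut i⟩

/-- If a graded monomial x_{i_1,h_1} ⋯ x_{i_p,h_p} is a graded identity of
M_n(F) with an elementary G-grading, then it is a consequence of (lies in the T_G-ideal
generated by) a graded monomial identity of M_n(F) of length at most 2n−1. -/
theorem stmt_16 (F : Type*) [Field F] [Infinite F] (G : Type*) [Group G] (n : ℕ)
    (g : Fin n → G)
    (p : ℕ) (idx : Fin p → ℕ) (h : Fin p → G)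
    (hid : IsGId g (MonoidAlgebra.of F (FreeMonoid (ℕ × G))
      (FreeMonoid.ofList (List.ofFn fun k : Fin p => (idx k, h k))) : FreeG F G)) :
    ∃ w : FreeMonoid (ℕ × G),
      (FreeMonoid.toList w).length ≤ 2 * n - 1 ∧
      IsGId g (MonoidAlgebra.of F (FreeMonoid (ℕ × G)) w : FreeG F G) ∧
      (MonoidAlgebra.of F (FreeMonoid (ℕ × G))
        (FreeMonoid.ofList (List.ofFn fun k : Fin p => (idx k, h k))) : FreeG F G)
        ∈ TIdealGen {(MonoidAlgebra.of F (FreeMonoid (ℕ × G)) w : FreeG F G)} :=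
  stmt_16_general F G n g p idx h hid
end
end

section
/- Suppose two products of generic (G,*)-matrices A_{i_1,h_1}^{ε_1}⋯A_{i_r,h_r}^{ε_r} and A_{j_1,h'_1}^{η_1}⋯A_{j_l,h'_l}^{η_l} have the same nonzero entry in the same position. Then r = l and there is a permutation σ ∈ S_r with j_q = i_{σ(q)} and h'_q = h_{σ(q)} for all q; in particular the difference of the two corresponding monomials is strongly multi-homogeneous. -/
open Matrix
open scoped Classical

/-!
Every generic matrix `A_{m,c}` or its transpose has at most one nonzero entry in each row, and that
entry is a single variable `y_{m,p,q}`, from which `(m, c)` can be read off as `(m, g_p⁻¹ g_q)`.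
Hence every entry of a product of such matrices is either zero or a monomial whose multiset of
variables, relabelled by `y_{m,p,q} ↦ (m, g_p⁻¹ g_q)`, is the multiset of the factors' labels
`(i_k, h_k)`. Two products sharing a nonzero entry thus share the monomial, so their label lists are
permutations of each other.
-/

open MvPolynomial

section RowMonomial

variable {ι σ α R : Type*} [Fintype ι] [CommSemiring R]

def IsRowMonomial (φ : σ → α) (a : α) (M : Matrix ι ι (MvPolynomial σ R)) : Prop :=
  ∀ p q, M p q ≠ 0 → ∃ v, φ v = a ∧ M p q = X v ∧ ∀ q', q' ≠ q → M p q' = 0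

theorem IsRowMonomial.mul_apply_eq_zero_or {φ : σ → α} {a : α}
    {M : Matrix ι ι (MvPolynomial σ R)} (hM : IsRowMonomial φ a M)
    (N : Matrix ι ι (MvPolynomial σ R)) (p q : ι) :
    (M * N) p q = 0 ∨ ∃ v q₀, φ v = a ∧ (M * N) p q = X v * N q₀ q := by
  by_cases hrow : ∃ q₀, M p q₀ ≠ 0
  · obtain ⟨q₀, hq₀⟩ := hrow
    obtain ⟨v, hv, hX, hzero⟩ := hM p q₀ hq₀
    refine Or.inr ⟨v, q₀, hv, ?_⟩
    rw [Matrix.mul_apply, Finset.sum_eq_single q₀ (fun k _ hk => by rw [hzero k hk, zero_mul])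
      (fun h => (h (Finset.mem_univ q₀)).elim), hX]
  · simp only [not_exists, not_not] at hrow
    exact Or.inl (by simp [Matrix.mul_apply, hrow])

theorem IsRowMonomial.prod_ofFn_apply_eq_zero_or [DecidableEq ι] {φ : σ → α} {r : ℕ}
    {M : Fin r → Matrix ι ι (MvPolynomial σ R)} {a : Fin r → α}
    (hM : ∀ k, IsRowMonomial φ (a k) (M k)) (p q : ι) :
    (List.ofFn M).prod p q = 0 ∨ ∃ s : σ →₀ ℕ,
      s.toMultiset.map φ = ↑(List.ofFn a) ∧ (List.ofFn M).prod p q = monomial s 1 := by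
  induction r generalizing p with
  | zero =>
    by_cases hpq : p = q
    · exact Or.inr ⟨0, by simp, by simp [hpq]⟩
    · exact Or.inl (by simp [hpq])
  | succ r ih =>
    rw [List.ofFn_succ, List.prod_cons]
    rcases (hM 0).mul_apply_eq_zero_or _ p q with h0 | ⟨v, q₀, hv, hvq⟩
    · exact Or.inl h0
    rcases ih (fun k => hM k.succ) q₀ with h0 | ⟨s, hs, hsq⟩
    · exact Or.inl (by rw [hvq, h0, mul_zero])
    · refine Or.inr ⟨Finsupp.single v 1 + s, ?_, ?_⟩
      · simp [Finsupp.toMultiset_add, hs, hv, List.ofFn_succ]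
      · rw [hvq, hsq, X, monomial_mul, one_mul]

theorem IsRowMonomial.perm_labels_of_prod_apply_eq [DecidableEq ι] [Nontrivial R] {φ : σ → α}
    {r l : ℕ} {M : Fin r → Matrix ι ι (MvPolynomial σ R)} {a : Fin r → α}
    {M' : Fin l → Matrix ι ι (MvPolynomial σ R)} {a' : Fin l → α}
    (hM : ∀ k, IsRowMonomial φ (a k) (M k)) (hM' : ∀ k, IsRowMonomial φ (a' k) (M' k))
    {p q : ι} (heq : (List.ofFn M).prod p q = (List.ofFn M').prod p q)
    (hne : (List.ofFn M).prod p q ≠ 0) :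
    (List.ofFn a).Perm (List.ofFn a') := by
  obtain ⟨s, hs, hsM⟩ := (IsRowMonomial.prod_ofFn_apply_eq_zero_or hM p q).resolve_left hne
  obtain ⟨s', hs', hsM'⟩ :=
    (IsRowMonomial.prod_ofFn_apply_eq_zero_or hM' p q).resolve_left (heq ▸ hne)
  have hss' : s = s' := monomial_left_injective one_ne_zero (hsM.symm.trans (heq.trans hsM'))
  rw [← Multiset.coe_eq_coe, ← hs, ← hs', hss']

end RowMonomial

theorem exists_perm_of_perm_ofFn {α : Type*} {r l : ℕ} {f : Fin r → α} {f' : Fin l → α}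
    (hperm : (List.ofFn f).Perm (List.ofFn f')) :
    ∃ (hrl : r = l) (σ : Equiv.Perm (Fin r)), ∀ m, f' (Fin.cast hrl m) = f (σ m) := by
  have hrl : r = l := by simpa using hperm.length_eq
  subst hrl
  let e : Fin (List.ofFn f').length ≃ Fin (List.ofFn f).length :=
    ⟨hperm.symm.idxBij, hperm.idxBij, hperm.idxBij_symm_rightInverse_idxBij,
      hperm.idxBij_rightInverse_idxBij_symm⟩
  refine ⟨rfl, (finCongr List.length_ofFn.symm).trans (e.trans (finCongr List.length_ofFn)),
    fun m => ?_⟩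
  have := hperm.getElem_idxBij_symm_eq_getElem (Fin.cast List.length_ofFn.symm m)
  simp only [List.getElem_ofFn] at this
  exact this.symm

section GradedGeneric

variable {ι G R : Type*} [Group G] [CommSemiring R]

/-- The variable `y_{m,p,q}` occurs only in the matrices `A_{m,c}` with `c = g_p⁻¹ g_q`. -/
def degreeLabel (g : ι → G) (v : ℕ × ι × ι) : ℕ × G := (v.1, (g v.2.1)⁻¹ * g v.2.2)

theorem isRowMonomial_of_graded_generic {g : ι → G} (hg : Function.Injective g) {m : ℕ} {c : G}
    {M : Matrix ι ι (MvPolynomial (ℕ × ι × ι) R)}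
    (hM : ∀ p q, M p q = if g p * c = g q then X (m, p, q) else 0) :
    IsRowMonomial (degreeLabel g) (m, c) M ∧ IsRowMonomial (degreeLabel g) (m, c) Mᵀ := by
  constructor
  · intro p q hpq
    rw [hM] at hpq
    have hc : g p * c = g q := by by_contra hc; simp [hc] at hpq
    refine ⟨(m, p, q), by simp [degreeLabel, ← hc], by rw [hM, if_pos hc], fun q' hq' => ?_⟩
    rw [hM, if_neg fun hc' => hq' (hg (hc'.symm.trans hc))]
  · intro p q hpq
    rw [transpose_apply, hM] at hpq
    have hc : g q * c = g p := by by_contra hc; simp [hc] at hpq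
    refine ⟨(m, q, p), by simp [degreeLabel, ← hc], by rw [transpose_apply, hM, if_pos hc],
      fun q' hq' => ?_⟩
    rw [transpose_apply, hM, if_neg fun hc' => hq' (hg (mul_right_cancel (hc'.trans hc.symm)))]

end GradedGeneric

/-- If two products of generic (G,*)-matrices
A_{i_1,h_1}^{ε_1}⋯A_{i_r,h_r}^{ε_r} and A_{j_1,h'_1}^{η_1}⋯A_{j_l,h'_l}^{η_l}
have the same nonzero entry in the same position, then r = l and there is a
permutation σ ∈ S_r with j_q = i_{σ(q)} and h'_q = h_{σ(q)} for all q (so the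
difference of the corresponding monomials is strongly multi-homogeneous). -/
theorem stmt_17 (F : Type*) [Field F] (G : Type*) [Group G] (n : ℕ)
    (g : Fin n → G) (hinj : Function.Injective g)
    (A : ℕ → G → Bool → Matrix (Fin n) (Fin n) (MvPolynomial (ℕ × Fin n × Fin n) F))
    (hA : ∀ (m : ℕ) (c : G) (p q : Fin n),
      (A m c false p q = if g p * c = g q then MvPolynomial.X (m, p, q) else 0) ∧
      A m c true = (A m c false)ᵀ)
    (r l : ℕ) (i : Fin r → ℕ) (h : Fin r → G) (ε : Fin r → Bool)
    (j : Fin l → ℕ) (h' : Fin l → G) (η : Fin l → Bool)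
    (p q : Fin n)
    (hsame : (List.ofFn fun k : Fin r => A (i k) (h k) (ε k)).prod p q =
             (List.ofFn fun k : Fin l => A (j k) (h' k) (η k)).prod p q)
    (hnz : (List.ofFn fun k : Fin r => A (i k) (h k) (ε k)).prod p q ≠ 0) :
    ∃ (hrl : r = l) (σ : Equiv.Perm (Fin r)),
      ∀ m : Fin r, j (Fin.cast hrl m) = i (σ m) ∧ h' (Fin.cast hrl m) = h (σ m) := by
  have hrow : ∀ m c b, IsRowMonomial (degreeLabel g) (m, c) (A m c b) := by
    intro m c b
    have hgen := isRowMonomial_of_graded_generic hinj fun p q => (hA m c p q).1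
    cases b with
    | false => exact hgen.1
    | true => intro p q; rw [(hA m c p q).2]; exact hgen.2 p q
  obtain ⟨hrl, σ, hσ⟩ := exists_perm_of_perm_ofFn <|
    IsRowMonomial.perm_labels_of_prod_apply_eq (fun _ => hrow _ _ _) (fun _ => hrow _ _ _) hsame hnz
  exact ⟨hrl, σ, fun m => Prod.ext_iff.mp (hσ m)⟩
end
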